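/- arXiv:2203.15122 — 5 statements merged into one kernel-verified Lean document; each statement's English description precedes it below -/
import Mathlib

section
/- Let u : ℝ^p → ℝ^q solve u = f(r(x,u)) near x = 0, where r(x,u) = Σᵢ λᵢ(u)xⁱ, and assume Φ(x) := 1 - Σ_β (∂r/∂u^β)(x,u(x)) (df^β/dr)(r(x,u(x))) ≠ 0. Then ∂uᵅ/∂xⁱ(x) = Φ(x)⁻¹ λᵢ(u(x)) (dfᵅ/dr)(r(x,u(x))) for all i = 1,…,p and α = 1,…,q. In particular the tangent map T_x u has rank at most one. -/
open scoped BigOperators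

lemma clm_apply_sum {q : ℕ} (L : (Fin q → ℝ) →L[ℝ] ℝ) (v : Fin q → ℝ) :
    L v = ∑ β : Fin q, v β * L (Pi.single β 1) := by
  have hv : v = ∑ β : Fin q, v β • (Pi.single β 1 : Fin q → ℝ) := by
    funext j
    simp [Pi.single_apply, Finset.sum_apply]
  conv_lhs => rw [hv]
  rw [map_sum]
  simp [smul_eq_mul]

/-- derivative formula for a Riemann wave solution
`u = f(r(x,u))`: away from the gradient catastrophe (`Φ ≠ 0`) one has
`∂uᵅ/∂xⁱ = Φ⁻¹ λᵢ (dfᵅ/dr)`, so the tangent map has rank at most one. -/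
theorem stmt_4 (p q : ℕ)
    (f : ℝ → Fin q → ℝ) (hf : ContDiff ℝ (⊤ : ℕ∞) f)
    (lam : (Fin q → ℝ) → Fin p → ℝ) (hlam : ContDiff ℝ (⊤ : ℕ∞) lam)
    (u : (Fin p → ℝ) → Fin q → ℝ) (x : Fin p → ℝ)
    (hu : DifferentiableAt ℝ u x)
    (hsol : ∀ᶠ y in nhds x, u y = f (∑ i : Fin p, lam (u y) i * y i))
    (r0 : ℝ) (hr0 : r0 = ∑ i : Fin p, lam (u x) i * x i)
    (Φ : ℝ)
    (hΦdef : Φ = 1 - ∑ β : Fin q,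
      (∑ i : Fin p, fderiv ℝ (fun v => lam v i) (u x) (Pi.single β 1) * x i)
        * deriv (fun s => f s β) r0)
    (hΦ : Φ ≠ 0) :
    (∀ (i : Fin p) (α : Fin q),
      fderiv ℝ (fun y => u y α) x (Pi.single i 1)
        = Φ⁻¹ * lam (u x) i * deriv (fun s => f s α) r0) ∧
    (Matrix.of fun (α : Fin q) (i : Fin p) =>
      fderiv ℝ (fun y => u y α) x (Pi.single i 1)).rank ≤ 1 := by
  set R : (Fin p → ℝ) → ℝ := fun y => ∑ j : Fin p, lam (u y) j * y j with hRdef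
  have hRx : R x = r0 := by rw [hr0]
  set D := fderiv ℝ u x with hDdef
  have hD : HasFDerivAt u D x := hu.hasFDerivAt
  have hlamdiff : ∀ j : Fin p, Differentiable ℝ (fun v => lam v j) := by
    intro j
    exact (differentiable_pi.mp (hlam.differentiable (by simp))) j
  set L : Fin p → ((Fin p → ℝ) →L[ℝ] ℝ) :=
    fun j => (fderiv ℝ (fun v => lam v j) (u x)).comp D with hLdef
  have hlamj : ∀ j : Fin p, HasFDerivAt (fun y => lam (u y) j) (L j) x := by
    intro j
    exact ((hlamdiff j (u x)).hasFDerivAt).comp x hD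
  have hproj : ∀ j : Fin p, HasFDerivAt (fun y : Fin p → ℝ => y j)
      (ContinuousLinearMap.proj j : (Fin p → ℝ) →L[ℝ] ℝ) x :=
    fun j => by exact ((ContinuousLinearMap.proj j : (Fin p → ℝ) →L[ℝ] ℝ)).hasFDerivAt
  set A : (Fin p → ℝ) →L[ℝ] ℝ := ∑ j : Fin p,
      (lam (u x) j • (ContinuousLinearMap.proj j : (Fin p → ℝ) →L[ℝ] ℝ) + x j • L j)
    with hAdef
  have hR : HasFDerivAt R A x := by
    apply HasFDerivAt.fun_sum
    intro j _
    exact (hlamj j).mul (hproj j)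
  set g : Fin q → ℝ := fun α => deriv (fun s => f s α) r0 with hgdef
  have hfdiff : ∀ α : Fin q, Differentiable ℝ (fun s => f s α) := fun α =>
    (differentiable_pi.mp (hf.differentiable (by simp))) α
  -- derivative of each component of u
  have hcomp : ∀ α : Fin q, HasFDerivAt (fun y => u y α) (g α • A) x := by
    intro α
    have h1 : HasDerivAt (fun s => f s α) (g α) (R x) := by
      rw [hRx]; exact ((hfdiff α) r0).hasDerivAt
    have h2 : HasFDerivAt (fun y => f (R y) α) (g α • A) x :=
      h1.comp_hasFDerivAt x hR
    refine h2.congr_of_eventuallyEq ?_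
    filter_upwards [hsol] with y hy
    rw [hy]
  have hcomp' : ∀ β : Fin q, HasFDerivAt (fun y => u y β)
      ((ContinuousLinearMap.proj β : (Fin q → ℝ) →L[ℝ] ℝ).comp D) x :=
    fun β => by exact (ContinuousLinearMap.proj β).hasFDerivAt.comp x hD
  have hDβ : ∀ (v : Fin p → ℝ) (β : Fin q), D v β = g β * A v := by
    intro v β
    have := (hcomp' β).unique (hcomp β)
    have h := congrArg (fun T => T v) this
    simpa using h
  -- compute A (Pi.single i 1)
  have hkey : ∀ i : Fin p, A (Pi.single i 1) = Φ⁻¹ * lam (u x) i := by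
    intro i
    set a := A (Pi.single i 1) with hadef
    have hAe : a = lam (u x) i + ∑ j : Fin p, x j * L j (Pi.single i 1) := by
      rw [hadef, hAdef]
      rw [ContinuousLinearMap.sum_apply]
      simp only [ContinuousLinearMap.add_apply, ContinuousLinearMap.smul_apply,
        ContinuousLinearMap.proj_apply, smul_eq_mul]
      rw [Finset.sum_add_distrib]
      congr 1
      simp [Pi.single_apply, mul_ite]
    have hL : ∀ j : Fin p, L j (Pi.single i 1)
        = ∑ β : Fin q, (g β * a) * fderiv ℝ (fun v => lam v j) (u x) (Pi.single β 1) := by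
      intro j
      rw [hLdef]
      simp only [ContinuousLinearMap.comp_apply]
      rw [clm_apply_sum]
      refine Finset.sum_congr rfl fun β _ => ?_
      rw [hDβ]
    have hsum : ∑ j : Fin p, x j * L j (Pi.single i 1) = a * (1 - Φ) := by
      have h1Φ : (1 : ℝ) - Φ = ∑ β : Fin q,
          (∑ j : Fin p, fderiv ℝ (fun v => lam v j) (u x) (Pi.single β 1) * x j) * g β := by
        rw [hΦdef]; ring
      calc ∑ j : Fin p, x j * L j (Pi.single i 1)
          = ∑ j : Fin p, ∑ β : Fin q,
              x j * ((g β * a) * fderiv ℝ (fun v => lam v j) (u x) (Pi.single β 1)) := by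
            refine Finset.sum_congr rfl fun j _ => ?_
            rw [hL j, Finset.mul_sum]
        _ = ∑ β : Fin q, ∑ j : Fin p,
              x j * ((g β * a) * fderiv ℝ (fun v => lam v j) (u x) (Pi.single β 1)) :=
            Finset.sum_comm
        _ = ∑ β : Fin q, a *
              ((∑ j : Fin p, fderiv ℝ (fun v => lam v j) (u x) (Pi.single β 1) * x j) * g β) := by
            refine Finset.sum_congr rfl fun β _ => ?_
            simp only [Finset.sum_mul, Finset.mul_sum]
            exact Finset.sum_congr rfl fun j _ => by ring
        _ = a * (1 - Φ) := by rw [← Finset.mul_sum, h1Φ]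
    have heq : a = lam (u x) i + a * (1 - Φ) := by rw [hsum] at hAe; exact hAe
    have h2 : a * Φ = lam (u x) i := by linear_combination heq
    rw [← h2]
    field_simp

  have hmain : ∀ (i : Fin p) (α : Fin q),
      fderiv ℝ (fun y => u y α) x (Pi.single i 1)
        = Φ⁻¹ * lam (u x) i * deriv (fun s => f s α) r0 := by
    intro i α
    rw [(hcomp α).fderiv]
    simp only [ContinuousLinearMap.smul_apply, smul_eq_mul]
    rw [hkey i]
    ring
  refine ⟨hmain, ?_⟩
  have hM : (Matrix.of fun (α : Fin q) (i : Fin p) =>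
      fderiv ℝ (fun y => u y α) x (Pi.single i 1))
      = (Matrix.of fun (α : Fin q) (_ : Fin 1) => g α) *
        (Matrix.of fun (_ : Fin 1) (i : Fin p) => Φ⁻¹ * lam (u x) i) := by
    ext α i
    rw [Matrix.mul_apply]
    simp [hmain i α]
    ring
  rw [hM]
  calc ((Matrix.of fun (α : Fin q) (_ : Fin 1) => g α) *
        (Matrix.of fun (_ : Fin 1) (i : Fin p) => Φ⁻¹ * lam (u x) i)).rank
      ≤ (Matrix.of fun (α : Fin q) (_ : Fin 1) => g α).rank := Matrix.rank_mul_le_left _ _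
    _ ≤ Fintype.card (Fin 1) := Matrix.rank_le_card_width _
    _ = 1 := by simp
end

section
/- Let X₁,…,X_r be commuting coordinate vector fields ∂/∂χᵢ on ℝ^q and let X_{r+1} be a vector field with [Xᵢ, X_{r+1}] = h_{i}^{r+1} X_{r+1} + h_i^i Xᵢ for smooth functions h_i^{r+1}, h_i^i, where X₁ ∧ … ∧ X_{r+1} ≠ 0. Then ∂h_j^{r+1}/∂χᵢ = ∂h_i^{r+1}/∂χⱼ for all i ≠ j in {1,…,r}. -/
/-- compatibility condition in the induction step of the Modified
Frobenius Theorem: if the coordinate fields `∂/∂χᵢ` and `X_{r+1}` satisfy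
`[∂/∂χᵢ, X_{r+1}] = hᵢ^{r+1} X_{r+1} + hᵢⁱ ∂/∂χᵢ` and the `r+1` fields are
pointwise linearly independent, then `∂hⱼ^{r+1}/∂χᵢ = ∂hᵢ^{r+1}/∂χⱼ`. -/
theorem stmt_9 (q r : ℕ) (hr : r ≤ q)
    (Z : (Fin q → ℝ) → (Fin q → ℝ)) (hZ : ContDiff ℝ (⊤ : ℕ∞) Z)
    (a b : Fin r → (Fin q → ℝ) → ℝ)
    (ha : ∀ i, ContDiff ℝ (⊤ : ℕ∞) (a i)) (hb : ∀ i, ContDiff ℝ (⊤ : ℕ∞) (b i))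
    (hbra : ∀ (i : Fin r) (x : Fin q → ℝ),
      VectorField.lieBracket ℝ
          (fun _ => (Pi.single (Fin.castLE hr i) 1 : Fin q → ℝ)) Z x
        = a i x • Z x + b i x • (Pi.single (Fin.castLE hr i) 1 : Fin q → ℝ))
    (hindep : ∀ x : Fin q → ℝ,
      LinearIndependent ℝ
        (Fin.snoc (fun i : Fin r => (Pi.single (Fin.castLE hr i) 1 : Fin q → ℝ))
          (Z x) : Fin (r + 1) → (Fin q → ℝ))) :
    ∀ (i j : Fin r), i ≠ j → ∀ x : Fin q → ℝ,
      fderiv ℝ (a j) x (Pi.single (Fin.castLE hr i) 1)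
        = fderiv ℝ (a i) x (Pi.single (Fin.castLE hr j) 1) := by
  set e : Fin r → (Fin q → ℝ) := fun i => Pi.single (Fin.castLE hr i) 1 with he
  have hZd : Differentiable ℝ Z := hZ.differentiable (by simp)
  have hZd' : Differentiable ℝ (fderiv ℝ Z) :=
    (hZ.fderiv_right (m := (⊤ : ℕ∞)) (by simp)).differentiable (by simp)
  have had : ∀ i, Differentiable ℝ (a i) := fun i => (ha i).differentiable (by simp)
  have hbd : ∀ i, Differentiable ℝ (b i) := fun i => (hb i).differentiable (by simp)
  have hZ' : ∀ (i : Fin r) (x : Fin q → ℝ),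
      fderiv ℝ Z x (e i) = a i x • Z x + b i x • e i := by
    intro i x
    have := hbra i x
    simpa [VectorField.lieBracket, fderiv_const] using this
  have comp : ∀ (i j : Fin r) (x : Fin q → ℝ),
      fderiv ℝ (fderiv ℝ Z) x (e j) (e i)
        = fderiv ℝ (a i) x (e j) • Z x + a i x • fderiv ℝ Z x (e j)
          + fderiv ℝ (b i) x (e j) • e i := by
    intro i j x
    have h1 : fderiv ℝ (fun y => fderiv ℝ Z y (e i)) x
        = (fderiv ℝ Z x).comp (fderiv ℝ (fun _ : Fin q → ℝ => e i) x)
          + (fderiv ℝ (fderiv ℝ Z) x).flip (e i) :=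
      fderiv_clm_apply (hZd' x) (differentiableAt_const _)
    have h2 : (fun y => fderiv ℝ Z y (e i)) = fun y => a i y • Z y + b i y • e i :=
      funext fun y => hZ' i y
    have h3 : fderiv ℝ (fun y => a i y • Z y + b i y • e i) x
        = (a i x • fderiv ℝ Z x + (fderiv ℝ (a i) x).smulRight (Z x))
          + (fderiv ℝ (b i) x).smulRight (e i) := by
      rw [fderiv_fun_add ((had i x).fun_smul (hZd x)) ((hbd i x).smul_const _),
        fderiv_fun_smul (had i x) (hZd x),
        fderiv_smul_const (hbd i x)]
    have := h1.symm.trans (h2 ▸ h3)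
    have h4 := DFunLike.congr_fun this (e j)
    simp only [ContinuousLinearMap.add_apply, ContinuousLinearMap.coe_comp',
      Function.comp_apply, ContinuousLinearMap.flip_apply,
      ContinuousLinearMap.smulRight_apply, ContinuousLinearMap.smul_apply,
      fderiv_const_apply, Pi.zero_apply, ContinuousLinearMap.zero_apply, map_zero, zero_add] at h4
    rw [h4]; abel
  intro i j hij x
  have sym : fderiv ℝ (fderiv ℝ Z) x (e j) (e i)
      = fderiv ℝ (fderiv ℝ Z) x (e i) (e j) :=
    second_derivative_symmetric (fun y => (hZd y).hasFDerivAt)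
      (hZd' x).hasFDerivAt (e j) (e i)
  have main : fderiv ℝ (a i) x (e j) • Z x + a i x • (a j x • Z x + b j x • e j)
        + fderiv ℝ (b i) x (e j) • e i
      = fderiv ℝ (a j) x (e i) • Z x + a j x • (a i x • Z x + b i x • e i)
        + fderiv ℝ (b j) x (e i) • e j := by
    have := (comp i j x).symm.trans (sym.trans (comp j i x))
    rwa [hZ' j x, hZ' i x] at this
  have h0 : (fderiv ℝ (a i) x (e j) - fderiv ℝ (a j) x (e i)) • Z x
      + (fderiv ℝ (b i) x (e j) - a j x * b i x) • e i
      + (a i x * b j x - fderiv ℝ (b j) x (e i)) • e j = 0 := by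
    linear_combination (norm := module) main
  have key : fderiv ℝ (a i) x (e j) - fderiv ℝ (a j) x (e i) = 0 := by
    set v : Fin (r + 1) → (Fin q → ℝ) := Fin.snoc e (Z x) with hv
    have li := hindep x
    have minj : Function.Injective
        (![Fin.castSucc i, Fin.castSucc j, Fin.last r] : Fin 3 → Fin (r + 1)) := by
      have hi := i.2; have hj := j.2
      have hvij : (i : ℕ) ≠ (j : ℕ) := fun h => hij (Fin.ext h)
      intro s t h
      fin_cases s <;> fin_cases t <;>
        simp_all [Fin.ext_iff, Fin.castSucc, Fin.last] <;> omega
    have li3 := li.comp _ minj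
    have := Fintype.linearIndependent_iff.1 li3
      ![fderiv ℝ (b i) x (e j) - a j x * b i x,
        a i x * b j x - fderiv ℝ (b j) x (e i),
        fderiv ℝ (a i) x (e j) - fderiv ℝ (a j) x (e i)]
      (by
        simp only [Fin.sum_univ_three, Function.comp_apply, Matrix.cons_val_zero,
          Matrix.cons_val_one, Matrix.head_cons, Matrix.cons_val_two, Matrix.tail_cons,
          hv, Fin.snoc_castSucc, Fin.snoc_last]
        linear_combination (norm := module) h0)
    simpa using this 2
  linarith
end

section
/- The pair of functions u₁(t,x,y) = -ln|y|, u₂(t,x,y) = t, defined for 0 < |y| < 1, is a solution of the system u₁ₜ + x u₂ₓ + y u₁ u₂ᵧ = 0 and u₂ₜ + x u₂ u₁ₓ + y u₁ᵧ = 0. -/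
/-- `u₁ = -ln|y|`, `u₂ = t` (for `0 < |y| < 1`) is an explicit
double-wave solution of the hydrodynamic system
`u₁ₜ + x u₂ₓ + y u₁ u₂ᵧ = 0`, `u₂ₜ + x u₂ u₁ₓ + y u₁ᵧ = 0`. -/
theorem stmt_13
    (u1 u2 : ℝ → ℝ → ℝ → ℝ)
    (hu1 : ∀ t x y, u1 t x y = -Real.log |y|)
    (hu2 : ∀ t x y, u2 t x y = t) :
    ∀ t x y : ℝ, 0 < |y| → |y| < 1 →
      (deriv (fun s => u1 s x y) t + x * deriv (fun s => u2 t s y) x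
        + y * u1 t x y * deriv (fun s => u2 t x s) y = 0) ∧
      (deriv (fun s => u2 s x y) t + x * u2 t x y * deriv (fun s => u1 t s y) x
        + y * deriv (fun s => u1 t x s) y = 0) := by
  obtain rfl : u1 = fun _ _ y => -Real.log |y| := by funext t x y; exact hu1 t x y
  obtain rfl : u2 = fun t _ _ => t := by funext t x y; exact hu2 t x y
  intro t x y hy _
  have hy0 : y ≠ 0 := abs_pos.mp hy
  have hlog : deriv (fun s => -Real.log |s|) y = -y⁻¹ := by
    simp only [Real.log_abs, deriv.fun_neg, Real.deriv_log]
  -- The first equation only involves vanishing derivatives; the second reads `1 + y * (-1 / y) = 0`.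
  refine ⟨by simp, ?_⟩
  rw [hlog, deriv_id'', deriv_const, mul_neg, mul_inv_cancel₀ hy0]
  ring
end

section
/- For y with 0 < |y| < 1 and t, τ₀ such that (t - τ₀)² - 8 ln|y| > 0 and t·(t+τ₀ - √((t-τ₀)² - 8 ln|y|)) terms are well defined, the functions u₁(t,x,y) = (1/4)·( (t + τ₀ - √((t-τ₀)² - 8 ln|y|))/2 - τ₀ )² and u₂(t,x,y) = (t + τ₀ - √((t-τ₀)² - 8 ln|y|))/2 - τ₀' solve the system u₁ₜ + x u₂ₓ + y u₁ u₂ᵧ = 0, u₂ₜ + x u₂ u₁ₓ + y u₁ᵧ = 0. -/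
set_option maxHeartbeats 1000000


/-- the '+' branch simple Riemann wave
`u₁ = (1/4)((t+τ₀-√((t-τ₀)²-8 ln|y|))/2 - τ₀)²`,
`u₂ = (t+τ₀-√((t-τ₀)²-8 ln|y|))/2 - τ₀'`
solves the hydrodynamic system
`u₁ₜ + x u₂ₓ + y u₁ u₂ᵧ = 0`, `u₂ₜ + x u₂ u₁ₓ + y u₁ᵧ = 0`. -/
theorem stmt_14 (τ₀ τ₀' : ℝ)
    (u1 u2 : ℝ → ℝ → ℝ → ℝ)
    (hu1 : ∀ t x y, u1 t x y =
      (1 / 4) * ((t + τ₀ - Real.sqrt ((t - τ₀) ^ 2 - 8 * Real.log |y|)) / 2 - τ₀) ^ 2)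
    (hu2 : ∀ t x y, u2 t x y =
      (t + τ₀ - Real.sqrt ((t - τ₀) ^ 2 - 8 * Real.log |y|)) / 2 - τ₀') :
    ∀ t x y : ℝ, 0 < |y| → |y| < 1 →
      0 < (t - τ₀) ^ 2 - 8 * Real.log |y| →
      (deriv (fun s => u1 s x y) t + x * deriv (fun s => u2 t s y) x
        + y * u1 t x y * deriv (fun s => u2 t x s) y = 0) ∧
      (deriv (fun s => u2 s x y) t + x * u2 t x y * deriv (fun s => u1 t s y) x
        + y * deriv (fun s => u1 t x s) y = 0) := by
  intro t x y hy0 _hy1 hD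
  have hy : y ≠ 0 := by
    intro h; simp [h] at hy0
  have hLabs : Real.log |y| = Real.log y := Real.log_abs y
  set L := Real.log y with hLdef
  set D := (t - τ₀) ^ 2 - 8 * L with hDdef
  rw [hLabs] at hD
  set S := Real.sqrt D with hSdef
  have hS : 0 < S := Real.sqrt_pos.mpr hD
  have hS2 : S ^ 2 = D := Real.sq_sqrt hD.le
  -- x derivatives vanish
  have hdx2 : deriv (fun s => u2 t s y) x = 0 := by
    have : (fun s => u2 t s y) = fun _ => u2 t x y := by
      funext s; rw [hu2, hu2]
    rw [this]; simp
  have hdx1 : deriv (fun s => u1 t s y) x = 0 := by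
    have : (fun s => u1 t s y) = fun _ => u1 t x y := by
      funext s; rw [hu1, hu1]
    rw [this]; simp
  -- t derivatives
  have hDt : HasDerivAt (fun s : ℝ => (s - τ₀) ^ 2 - 8 * L) (2 * (t - τ₀)) t := by
    have h := ((hasDerivAt_id t).sub_const τ₀).pow 2
    simpa using h.sub_const (8 * L)
  have hSt : HasDerivAt (fun s : ℝ => Real.sqrt ((s - τ₀) ^ 2 - 8 * L))
      (2 * (t - τ₀) / (2 * S)) t := hDt.sqrt hD.ne'
  have hinner_t : HasDerivAt (fun s : ℝ =>
      (s + τ₀ - Real.sqrt ((s - τ₀) ^ 2 - 8 * L)) / 2 - τ₀)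
      ((1 - 2 * (t - τ₀) / (2 * S)) / 2) t := by
    have h := (((hasDerivAt_id t).add_const τ₀).sub hSt).div_const 2
    simpa using h.sub_const τ₀
  have hu1t : deriv (fun s => u1 s x y) t =
      (1 / 4) * (2 * ((t + τ₀ - S) / 2 - τ₀) * ((1 - 2 * (t - τ₀) / (2 * S)) / 2)) := by
    have hfun : (fun s => u1 s x y) = fun s =>
        (1 / 4) * ((s + τ₀ - Real.sqrt ((s - τ₀) ^ 2 - 8 * L)) / 2 - τ₀) ^ 2 := by
      funext s; rw [hu1, hLabs]
    rw [hfun]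
    have h := (hinner_t.pow 2).const_mul (1 / 4 : ℝ)
    have := h.deriv
    simpa [hSdef, hDdef] using this
  have hu2t : deriv (fun s => u2 s x y) t = (1 - 2 * (t - τ₀) / (2 * S)) / 2 := by
    have hfun : (fun s => u2 s x y) = fun s =>
        ((s + τ₀ - Real.sqrt ((s - τ₀) ^ 2 - 8 * L)) / 2 - τ₀) - (τ₀' - τ₀) := by
      funext s; rw [hu2, hLabs]; ring
    rw [hfun]
    have h := hinner_t.sub_const (τ₀' - τ₀)
    simpa [hSdef, hDdef] using h.deriv
  -- y derivatives
  have hlog : HasDerivAt (fun s : ℝ => Real.log |s|) y⁻¹ y := by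
    have h := Real.hasDerivAt_log hy
    have hfun : (fun s : ℝ => Real.log |s|) = fun s => Real.log s := by
      funext s; exact Real.log_abs s
    rw [hfun]; exact h
  have hDy : HasDerivAt (fun s : ℝ => (t - τ₀) ^ 2 - 8 * Real.log |s|)
      (-(8 * y⁻¹)) y := by
    have h := (hlog.const_mul (8 : ℝ)).const_sub ((t - τ₀) ^ 2)
    simpa using h
  have hval : (t - τ₀) ^ 2 - 8 * Real.log |y| = D := by rw [hLabs]
  have hSy : HasDerivAt (fun s : ℝ => Real.sqrt ((t - τ₀) ^ 2 - 8 * Real.log |s|))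
      (-(8 * y⁻¹) / (2 * S)) y := by
    have h := hDy.sqrt (by rw [hval]; exact hD.ne')
    rw [hval] at h
    exact h
  have hu2y : deriv (fun s => u2 t x s) y = (0 - -(8 * y⁻¹) / (2 * S)) / 2 := by
    have hfun : (fun s => u2 t x s) = fun s =>
        (t + τ₀ - Real.sqrt ((t - τ₀) ^ 2 - 8 * Real.log |s|)) / 2 - τ₀' := by
      funext s; rw [hu2]
    rw [hfun]
    have h := (((hasDerivAt_const y (t + τ₀)).sub hSy).div_const 2).sub_const τ₀'
    simpa using h.deriv
  have hu1y : deriv (fun s => u1 t x s) y =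
      (1 / 4) * (2 * ((t + τ₀ - S) / 2 - τ₀) * ((0 - -(8 * y⁻¹) / (2 * S)) / 2)) := by
    have hfun : (fun s => u1 t x s) = fun s =>
        (1 / 4) * ((t + τ₀ - Real.sqrt ((t - τ₀) ^ 2 - 8 * Real.log |s|)) / 2 - τ₀) ^ 2 := by
      funext s; rw [hu1]
    rw [hfun]
    have hin : HasDerivAt (fun s : ℝ =>
        (t + τ₀ - Real.sqrt ((t - τ₀) ^ 2 - 8 * Real.log |s|)) / 2 - τ₀)
        ((0 - -(8 * y⁻¹) / (2 * S)) / 2) y := by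
      have h := (((hasDerivAt_const y (t + τ₀)).sub hSy).div_const 2).sub_const τ₀
      simpa using h
    have h := (hin.pow 2).const_mul (1 / 4 : ℝ)
    have hval2 : Real.sqrt ((t - τ₀) ^ 2 - 8 * Real.log |y|) = S := by
      rw [hval]
    simpa [hval2] using h.deriv
  have hu1v : u1 t x y = (1 / 4) * ((t + τ₀ - S) / 2 - τ₀) ^ 2 := by
    rw [hu1, hval]
  have hu2v : u2 t x y = (t + τ₀ - S) / 2 - τ₀' := by
    rw [hu2, hval]
  clear_value S D L
  clear hu1 hu2
  constructor
  · rw [hu1t, hdx2, hu1v, hu2y]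
    field_simp
    ring_nf
  · rw [hu2t, hdx1, hu1y]
    rw [mul_zero, add_zero]
    field_simp
    ring_nf
end

section
/- Fix constants m, k, c ∈ ℝ with k ≠ 0, c ≠ 0. For (t,x,y) with t ≠ 0, x > 0, y > 0, and 4c²kt·ln(x^m y^k) + (cmt+1)² > 0, the function u(t,x,y) = -( √(4c²kt·ln(x^m y^k) + (cmt+1)²) + cmt + 1 ) / (2ckt) is a solution of the scalar PDE u_t + x·u·u_x + y·u²·u_y = 0. -/
/-!
With `R = ln (x^m y^k) = m ln x + k ln y`, the function `u` is the root
`w = -(S + cmt + 1)/(2ckt)`, `S = √(4c²ktR + (cmt+1)²)`, of the hodograph relation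
`ckt w² + (cmt + 1) w = cR`. Since `u` depends on `(x, y)` only through `R`, and
`x ∂R/∂x = m`, `y ∂R/∂y = k`, the equation reduces to `w_t + (m w + k w²) w_R = 0`.
Differentiating the hodograph relation, whose `w`-derivative is `2cktw + cmt + 1 = -S`,
gives `w_R = -c/S` and `w_t = c (m w + k w²)/S`.
-/

open Real

noncomputable def simpleWave (m k c t R : ℝ) : ℝ :=
  -((√(4 * c ^ 2 * k * t * R + (c * m * t + 1) ^ 2) + c * m * t + 1) / (2 * c * k * t))

theorem hasDerivAt_log_rpow_mul (p : ℝ) {a x : ℝ} (ha : 0 < a) (hx : 0 < x) :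
    HasDerivAt (fun s => log (s ^ p * a)) (p / x) x := by
  have hlin : HasDerivAt (fun s => p * log s + log a) (p / x) x := by
    simpa [div_eq_mul_inv] using ((hasDerivAt_log hx.ne').const_mul p).add_const (log a)
  refine hlin.congr_of_eventuallyEq ?_
  filter_upwards [Ioi_mem_nhds hx] with s hs
  rw [log_mul (rpow_pos_of_pos hs p).ne' ha.ne', log_rpow hs]

section simpleWave

variable {m k c t R : ℝ}

theorem hasDerivAt_simpleWave_right (hk : k ≠ 0) (hc : c ≠ 0) (ht : t ≠ 0)
    (hD : 0 < 4 * c ^ 2 * k * t * R + (c * m * t + 1) ^ 2) :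
    HasDerivAt (fun r => simpleWave m k c t r)
      (-c / √(4 * c ^ 2 * k * t * R + (c * m * t + 1) ^ 2)) R := by
  have hdisc : HasDerivAt (fun r => 4 * c ^ 2 * k * t * r + (c * m * t + 1) ^ 2)
      (4 * c ^ 2 * k * t) R := by
    simpa using
      ((hasDerivAt_id R).const_mul (4 * c ^ 2 * k * t)).add_const ((c * m * t + 1) ^ 2)
  refine ((((hdisc.sqrt hD.ne').add_const (c * m * t)).add_const 1).div_const
    (2 * c * k * t)).neg.congr_deriv ?_
  have hS : 0 < √(4 * c ^ 2 * k * t * R + (c * m * t + 1) ^ 2) := sqrt_pos.mpr hD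
  field_simp
  ring

theorem hasDerivAt_simpleWave_left (hk : k ≠ 0) (hc : c ≠ 0) (ht : t ≠ 0)
    (hD : 0 < 4 * c ^ 2 * k * t * R + (c * m * t + 1) ^ 2) :
    HasDerivAt (fun s => simpleWave m k c s R)
      (c * (m * simpleWave m k c t R + k * simpleWave m k c t R ^ 2)
        / √(4 * c ^ 2 * k * t * R + (c * m * t + 1) ^ 2)) t := by
  have hmul : ∀ a : ℝ, HasDerivAt (fun s => a * s) a t := fun a => by
    simpa using (hasDerivAt_id t).const_mul a
  have hdisc : HasDerivAt (fun s => 4 * c ^ 2 * k * s * R + (c * m * s + 1) ^ 2)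
      (4 * c ^ 2 * k * R + 2 * c * m * (c * m * t + 1)) t := by
    refine (((hmul _).mul_const R).add (((hmul (c * m)).add_const 1).pow 2)).congr_deriv ?_
    push_cast
    ring
  have hnum : HasDerivAt
      (fun s => √(4 * c ^ 2 * k * s * R + (c * m * s + 1) ^ 2) + c * m * s + 1)
      ((4 * c ^ 2 * k * R + 2 * c * m * (c * m * t + 1))
        / (2 * √(4 * c ^ 2 * k * t * R + (c * m * t + 1) ^ 2)) + c * m) t :=
    ((hdisc.sqrt hD.ne').add (hmul _)).add_const 1
  refine (hnum.div (hmul _) (by simp [hc, hk, ht])).neg.congr_deriv ?_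
  unfold simpleWave
  set S := √(4 * c ^ 2 * k * t * R + (c * m * t + 1) ^ 2)
  have hS : 0 < S := sqrt_pos.mpr hD
  have hS2 : S ^ 2 = 4 * c ^ 2 * k * t * R + (c * m * t + 1) ^ 2 := sq_sqrt hD.le
  clear_value S
  -- eliminating `R` turns the claim into a rational identity in `S`
  have hR : R = (S ^ 2 - (c * m * t + 1) ^ 2) / (4 * c ^ 2 * k * t) := by
    field_simp; linarith
  subst hR
  field_simp
  ring

end simpleWave

/-- the explicit simple wave
`u = -(√(4c²kt ln(x^m y^k) + (cmt+1)²) + cmt + 1)/(2ckt)` solves the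
hydrodynamic-type equation `u_t + x u u_x + y u² u_y = 0`. -/
theorem stmt_15 (m k c : ℝ) (hk : k ≠ 0) (hc : c ≠ 0)
    (u : ℝ → ℝ → ℝ → ℝ)
    (hu : ∀ t x y, u t x y =
      -((Real.sqrt (4 * c ^ 2 * k * t * Real.log (x ^ m * y ^ k)
          + (c * m * t + 1) ^ 2) + c * m * t + 1) / (2 * c * k * t))) :
    ∀ t x y : ℝ, t ≠ 0 → 0 < x → 0 < y →
      0 < 4 * c ^ 2 * k * t * Real.log (x ^ m * y ^ k) + (c * m * t + 1) ^ 2 →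
      deriv (fun s => u s x y) t
        + x * u t x y * deriv (fun s => u t s y) x
        + y * (u t x y) ^ 2 * deriv (fun s => u t x s) y = 0 := by
  intro t x y ht hx hy hD
  obtain rfl : u = fun t x y => simpleWave m k c t (log (x ^ m * y ^ k)) := by
    funext t x y; exact hu t x y
  beta_reduce
  set R := log (x ^ m * y ^ k)
  set S := √(4 * c ^ 2 * k * t * R + (c * m * t + 1) ^ 2)
  have hwR : HasDerivAt (simpleWave m k c t) (-c / S) R :=
    hasDerivAt_simpleWave_right hk hc ht hD
  have hT : deriv (fun s => simpleWave m k c s R) t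
      = c * (m * simpleWave m k c t R + k * simpleWave m k c t R ^ 2) / S :=
    (hasDerivAt_simpleWave_left hk hc ht hD).deriv
  have hlogX : HasDerivAt (fun s => log (s ^ m * y ^ k)) (m / x) x :=
    hasDerivAt_log_rpow_mul m (rpow_pos_of_pos hy k) hx
  have hlogY : HasDerivAt (fun s => log (x ^ m * s ^ k)) (k / y) y := by
    simpa only [mul_comm] using hasDerivAt_log_rpow_mul k (rpow_pos_of_pos hx m) hy
  have hX : deriv (fun s => simpleWave m k c t (log (s ^ m * y ^ k))) x = -c / S * (m / x) :=
    (HasDerivAt.comp (h₂ := simpleWave m k c t) x hwR hlogX).deriv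
  have hY : deriv (fun s => simpleWave m k c t (log (x ^ m * s ^ k))) y = -c / S * (k / y) :=
    (HasDerivAt.comp (h₂ := simpleWave m k c t) y hwR hlogY).deriv
  have hS : 0 < S := sqrt_pos.mpr hD
  rw [hT, hX, hY]
  field_simp
  ring
end
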